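/- Let G be a Lie group and let F be a bi-invariant distribution on G. Then the set S = { g ∈ G : there exists a smooth curve a : ℝ → G tangent to F with a(0) = e and a(1) = g } is a subgroup of G: it contains e, it is closed under multiplication, and it is closed under inversion. -/

import Mathlib

open scoped Manifold

/-!
By the product rule, the velocity of `t ↦ a t * b t` is `dR_{b t} (a' t) + dL_{a t} (b' t)`,
which lies in `F` when both curves are tangent to `F` and `F` is bi-invariant. For inverses,
no derivative of inversion is needed: if `a` runs from `1` to `x`, then `t ↦ a (1 - t) * x⁻¹`
runs from `1` to `x⁻¹`, and its velocity `-dR_{x⁻¹} (a' (1 - t))` lies in `F` by right invariance.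
-/

section Calculus

variable {𝕜 : Type*} [NontriviallyNormedField 𝕜]
  {E : Type*} [NormedAddCommGroup E] [NormedSpace 𝕜 E] {H : Type*} [TopologicalSpace H]
  {I : ModelWithCorners 𝕜 E H} {G : Type*} [TopologicalSpace G] [ChartedSpace H G] [Monoid G]
  [ContMDiffMul I 1 G]

theorem mfderiv_mul_left_mul_apply (g h : G) (v : TangentSpace I (1 : G)) :
    mfderiv I I (fun x : G => g * h * x) 1 v =
      mfderiv I I (fun x : G => g * x) h (mfderiv I I (fun x : G => h * x) 1 v) := by
  have : (fun x : G => g * h * x) = (g * ·) ∘ (h * ·) := by funext x; simp [mul_assoc]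
  rw [this]
  exact mfderiv_comp_apply_of_eq 1 mdifferentiableAt_mul_left mdifferentiableAt_mul_left
    (mul_one h) v

theorem mfderiv_mul_right_mul_apply (g h : G) (v : TangentSpace I (1 : G)) :
    mfderiv I I (fun x : G => x * (g * h)) 1 v =
      mfderiv I I (fun x : G => x * h) g (mfderiv I I (fun x : G => x * g) 1 v) := by
  have : (fun x : G => x * (g * h)) = (· * h) ∘ (· * g) := by funext x; simp [mul_assoc]
  rw [this]
  exact mfderiv_comp_apply_of_eq 1 mdifferentiableAt_mul_right mdifferentiableAt_mul_right
    (one_mul g) v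

variable {E' : Type*} [NormedAddCommGroup E'] [NormedSpace 𝕜 E'] {H' : Type*}
  [TopologicalSpace H'] {J : ModelWithCorners 𝕜 E' H'}
  {M : Type*} [TopologicalSpace M] [ChartedSpace H' M]

theorem mfderiv_mul_apply {f g : M → G} {x : M} (hf : MDifferentiableAt J I f x)
    (hg : MDifferentiableAt J I g x) (v : TangentSpace J x) :
    mfderiv J I (fun y => f y * g y) x v =
      mfderiv I I (fun z : G => z * g x) (f x) (mfderiv J I f x v) +
        mfderiv I I (fun z : G => f x * z) (g x) (mfderiv J I g x v) := by
  have hmul : MDifferentiableAt (I.prod I) I (fun p : G × G => p.1 * p.2) (f x, g x) :=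
    (contMDiff_mul I 1).mdifferentiableAt one_ne_zero
  change mfderiv J I ((fun p : G × G => p.1 * p.2) ∘ fun y => (f y, g y)) x v = _
  rw [mfderiv_comp_apply x hmul (hf.prodMk hg), hf.mfderiv_prod hg]
  exact mfderiv_prod_eq_add_apply hmul

end Calculus

section

variable {E : Type*} [NormedAddCommGroup E] [NormedSpace ℝ E] {H : Type*} [TopologicalSpace H]
  {I : ModelWithCorners ℝ E H}

section Curves

variable {M : Type*} [TopologicalSpace M] [ChartedSpace H M]

def IsTangentCurve (F : ∀ x : M, Submodule ℝ (TangentSpace I x)) (a : ℝ → M) : Prop :=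
  ∀ t : ℝ, mfderiv 𝓘(ℝ, ℝ) I a t (1 : ℝ) ∈ F (a t)

theorem isTangentCurve_const (F : ∀ x : M, Submodule ℝ (TangentSpace I x)) (x : M) :
    IsTangentCurve F (fun _ : ℝ => x) := by
  intro t
  rw [mfderiv_const]
  exact (F x).zero_mem

theorem IsTangentCurve.comp_one_sub {F : ∀ x : M, Submodule ℝ (TangentSpace I x)} {a : ℝ → M}
    (ha : IsTangentCurve F a) (ha' : MDifferentiable 𝓘(ℝ, ℝ) I a) :
    IsTangentCurve F (fun t => a (1 - t)) := by
  intro t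
  have hrev : MDifferentiableAt 𝓘(ℝ, ℝ) 𝓘(ℝ, ℝ) (fun t : ℝ => 1 - t) t :=
    (differentiableAt_id.const_sub 1).mdifferentiableAt
  have hvel : mfderiv 𝓘(ℝ, ℝ) 𝓘(ℝ, ℝ) (fun t : ℝ => 1 - t) t 1 = -1 := by
    rw [mfderiv_eq_fderiv, fderiv_const_sub, fderiv_fun_id]
    rfl
  change mfderiv 𝓘(ℝ, ℝ) I (a ∘ fun t => 1 - t) t 1 ∈ _
  rw [mfderiv_comp_apply t (ha' _) hrev, hvel, map_neg]
  exact neg_mem (ha (1 - t))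

end Curves

variable {G : Type*} [TopologicalSpace G] [ChartedSpace H G] [Monoid G]

def IsLeftInvariantDistribution (F : ∀ g : G, Submodule ℝ (TangentSpace I g)) : Prop :=
  ∀ g : G, F g = (F 1).map
    (ContinuousLinearMap.toLinearMap (M₂ := TangentSpace I g) (mfderiv I I (fun x : G => g * x) 1))

def IsRightInvariantDistribution (F : ∀ g : G, Submodule ℝ (TangentSpace I g)) : Prop :=
  ∀ g : G, F g = (F 1).map
    (ContinuousLinearMap.toLinearMap (M₂ := TangentSpace I g) (mfderiv I I (fun x : G => x * g) 1))

variable [ContMDiffMul I 1 G] {F : ∀ g : G, Submodule ℝ (TangentSpace I g)}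

theorem IsLeftInvariantDistribution.mfderiv_mul_left_mem (hF : IsLeftInvariantDistribution F)
    (g : G) {h : G} {v : TangentSpace I h} (hv : v ∈ F h) :
    mfderiv I I (fun x : G => g * x) h v ∈ F (g * h) := by
  rw [hF h] at hv
  obtain ⟨w, hw, rfl⟩ := hv
  rw [hF (g * h)]
  exact ⟨w, hw, mfderiv_mul_left_mul_apply g h w⟩

theorem IsRightInvariantDistribution.mfderiv_mul_right_mem (hF : IsRightInvariantDistribution F)
    {g : G} (h : G) {v : TangentSpace I g} (hv : v ∈ F g) :
    mfderiv I I (fun x : G => x * h) g v ∈ F (g * h) := by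
  rw [hF g] at hv
  obtain ⟨w, hw, rfl⟩ := hv
  rw [hF (g * h)]
  exact ⟨w, hw, mfderiv_mul_right_mul_apply g h w⟩

theorem IsTangentCurve.mul_const (hF : IsRightInvariantDistribution F) {a : ℝ → G}
    (ha : IsTangentCurve F a) (ha' : MDifferentiable 𝓘(ℝ, ℝ) I a) (g : G) :
    IsTangentCurve F (fun t => a t * g) := by
  intro t
  change mfderiv 𝓘(ℝ, ℝ) I ((· * g) ∘ a) t 1 ∈ _
  rw [mfderiv_comp_apply t mdifferentiableAt_mul_right (ha' t)]
  exact hF.mfderiv_mul_right_mem g (ha t)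

theorem IsTangentCurve.mul (hL : IsLeftInvariantDistribution F)
    (hR : IsRightInvariantDistribution F) {a b : ℝ → G} (ha : IsTangentCurve F a)
    (hb : IsTangentCurve F b) (ha' : MDifferentiable 𝓘(ℝ, ℝ) I a)
    (hb' : MDifferentiable 𝓘(ℝ, ℝ) I b) :
    IsTangentCurve F (fun t => a t * b t) := by
  intro t
  rw [mfderiv_mul_apply (ha' t) (hb' t) (1 : ℝ)]
  exact add_mem (hR.mfderiv_mul_right_mem _ (ha t)) (hL.mfderiv_mul_left_mem _ (hb t))

end

/-- For a bi-invariant distribution `F` on a Lie group `G`, the set `S` of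
endpoints of `F`-tangent smooth curves starting at the identity is a subgroup of `G`:
it contains the identity, is closed under multiplication and is closed under inversion. -/
theorem leaf_through_identity_is_subgroup
    {E : Type*} [NormedAddCommGroup E] [NormedSpace ℝ E]
    {H : Type*} [TopologicalSpace H] {I : ModelWithCorners ℝ E H}
    {G : Type*} [TopologicalSpace G] [ChartedSpace H G] [Group G] [LieGroup I (⊤ : ℕ∞) G]
    (F : ∀ g : G, Submodule ℝ (TangentSpace I g))
    (hbi : ∀ g : G,
      F g = (F 1).map (ContinuousLinearMap.toLinearMap (M₂ := TangentSpace I g) (mfderiv I I (fun x : G => g * x) 1)) ∧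
      F g = (F 1).map (ContinuousLinearMap.toLinearMap (M₂ := TangentSpace I g) (mfderiv I I (fun x : G => x * g) 1)))
    (S : Set G)
    (hS : S = {g : G | ∃ a : ℝ → G, ContMDiff 𝓘(ℝ, ℝ) I (⊤ : ℕ∞) a ∧
      (∀ t : ℝ, mfderiv 𝓘(ℝ, ℝ) I a t (1 : ℝ) ∈ F (a t)) ∧ a 0 = 1 ∧ a 1 = g}) :
    (1 : G) ∈ S ∧ (∀ x y : G, x ∈ S → y ∈ S → x * y ∈ S) ∧ (∀ x : G, x ∈ S → x⁻¹ ∈ S) := by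
  subst hS
  have hL : IsLeftInvariantDistribution F := fun g => (hbi g).1
  have hR : IsRightInvariantDistribution F := fun g => (hbi g).2
  have hdiff {a : ℝ → G} (ha : ContMDiff 𝓘(ℝ, ℝ) I (⊤ : ℕ∞) a) : MDifferentiable 𝓘(ℝ, ℝ) I a :=
    ha.mdifferentiable (by simp)
  refine ⟨⟨fun _ => 1, contMDiff_const, isTangentCurve_const F 1, rfl, rfl⟩, ?_, ?_⟩
  · rintro x y ⟨a, ha, hta, ha0, ha1⟩ ⟨b, hb, htb, hb0, hb1⟩
    exact ⟨fun t => a t * b t, ha.mul hb, IsTangentCurve.mul hL hR hta htb (hdiff ha) (hdiff hb),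
      by simp [ha0, hb0], by simp [ha1, hb1]⟩
  · rintro x ⟨a, ha, hta, ha0, ha1⟩
    have ha_rev : ContMDiff 𝓘(ℝ, ℝ) I (⊤ : ℕ∞) (fun t => a (1 - t)) :=
      ha.comp (contMDiff_const.sub contMDiff_id)
    exact ⟨fun t => a (1 - t) * x⁻¹, ha_rev.mul contMDiff_const,
      (IsTangentCurve.comp_one_sub hta (hdiff ha)).mul_const hR (hdiff ha_rev) x⁻¹,
      by simp [ha1], by simp [ha0]⟩
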